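/- Let π : ℕ → (0, ∞) satisfy the quasi-multiplicativity bounds D₄ π(n₀|n₂) ≤ π(n₀|n₁)·π(n₁|n₂) ≤ D₅ π(n₀|n₂) for all n₀ < n₁ < n₂ (where π(n|N) denotes a two-point scale quantity) together with D₂ (n/N)^{1/2} ≤ π(n|N). Then there is a constant C₆ such that for all k, ∑_{j=0}^{k} 2^{2j} π(1|2^j) π(1|2^k) ≤ C₆ [2^k π(1|2^k)]². -/

import Mathlib

/-!
Only the linear consequence `D₂ n / N ≤ π n N` of the square-root bound is needed. Together with
the upper quasi-multiplicativity bound `π 1 n * π n N ≤ D₅ π 1 N` it shows that `n π(1|n)` is,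
up to a constant, increasing in `n`. Hence the `j`-th term `2^j · (2^j π(1|2^j)) · π(1|2^k)` is at
most `C 2^j (2^k π(1|2^k)) π(1|2^k)`, and the geometric sum over `j ≤ k` costs a factor `2^(k+1)`.
-/

open Finset

theorem geom_sum_two_pow_le (k : ℕ) : ∑ j ∈ range (k + 1), (2 : ℝ) ^ j ≤ 2 * 2 ^ k := by
  rw [geom_sum_eq (by norm_num : (2 : ℝ) ≠ 1), pow_succ]
  linarith

theorem sum_two_pow_mul_le {f : ℕ → ℝ} {C : ℝ} {k : ℕ} (h : ∀ j ≤ k, f j ≤ C * f k)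
    (h₀ : 0 ≤ C * f k) :
    ∑ j ∈ range (k + 1), (2 : ℝ) ^ j * f j ≤ 2 * C * (2 ^ k * f k) :=
  calc ∑ j ∈ range (k + 1), (2 : ℝ) ^ j * f j
      ≤ ∑ j ∈ range (k + 1), (2 : ℝ) ^ j * (C * f k) :=
        sum_le_sum fun j hj ↦ mul_le_mul_of_nonneg_left
          (h j (Nat.lt_succ_iff.mp (mem_range.mp hj))) (by positivity)
    _ = (∑ j ∈ range (k + 1), (2 : ℝ) ^ j) * (C * f k) := (sum_mul ..).symm
    _ ≤ 2 * 2 ^ k * (C * f k) := mul_le_mul_of_nonneg_right (geom_sum_two_pow_le k) h₀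
    _ = 2 * C * (2 ^ k * f k) := by ring

theorem le_of_le_rpow_half {D : ℝ} (hD : 0 ≤ D) {x y : ℝ} (hx₀ : 0 ≤ x) (hx₁ : x ≤ 1)
    (h : D * x ^ ((1 : ℝ) / 2) ≤ y) : D * x ≤ y :=
  (mul_le_mul_of_nonneg_left (Real.self_le_rpow_of_le_one hx₀ hx₁ (by norm_num)) hD).trans h

section QuasiMultiplicative

variable {π : ℕ → ℕ → ℝ} {D₂ D₅ : ℝ}

theorem mul_mul_le_of_quasiMultiplicative (hπpos : ∀ n N, 0 < π n N)
    (hqm : ∀ n₀ n₁ n₂ : ℕ, n₀ < n₁ → n₁ < n₂ → π n₀ n₁ * π n₁ n₂ ≤ D₅ * π n₀ n₂)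
    (hlin : ∀ n N : ℕ, 1 ≤ n → n ≤ N → D₂ * ((n : ℝ) / N) ≤ π n N)
    {n N : ℕ} (hn : 1 < n) (hnN : n < N) :
    D₂ * (n * π 1 n) ≤ D₅ * (N * π 1 N) := by
  have hN : (0 : ℝ) < N := by exact_mod_cast (hn.trans hnN).le
  have hlow : D₂ * n ≤ π n N * N := by
    rw [← div_le_iff₀ hN, mul_div_assoc]
    exact hlin n N hn.le hnN.le
  have hqmN := mul_le_mul_of_nonneg_left (hqm 1 n N hn hnN) hN.le
  nlinarith [mul_le_mul_of_nonneg_left hlow (hπpos 1 n).le]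

theorem le_mul_of_linear_lower_bound
    (hlin : ∀ n N : ℕ, 1 ≤ n → n ≤ N → D₂ * ((n : ℝ) / N) ≤ π n N) {N : ℕ} (hN : 1 ≤ N) :
    D₂ ≤ N * π 1 N := by
  have hN' : (0 : ℝ) < N := by exact_mod_cast hN
  have := hlin 1 N le_rfl hN
  rw [Nat.cast_one, mul_one_div, div_le_iff₀ hN'] at this
  linarith

theorem mul_le_const_mul_of_le (hD₂ : 0 < D₂) (hD₅ : 0 < D₅) (hπpos : ∀ n N, 0 < π n N)
    (hqm : ∀ n₀ n₁ n₂ : ℕ, n₀ < n₁ → n₁ < n₂ → π n₀ n₁ * π n₁ n₂ ≤ D₅ * π n₀ n₂)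
    (hlin : ∀ n N : ℕ, 1 ≤ n → n ≤ N → D₂ * ((n : ℝ) / N) ≤ π n N)
    {n N : ℕ} (hn : 1 ≤ n) (hnN : n ≤ N) :
    n * π 1 n ≤ (1 + D₅ / D₂ + π 1 1 / D₂) * (N * π 1 N) := by
  have hNpos : 0 < (N : ℝ) * π 1 N := mul_pos (by exact_mod_cast hn.trans hnN) (hπpos 1 N)
  have hD₅' : 0 ≤ D₅ / D₂ := by positivity
  have hπ₁' : 0 ≤ π 1 1 / D₂ := div_nonneg (hπpos 1 1).le hD₂.le
  rcases hnN.lt_or_eq with hnN | rfl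
  · rcases hn.lt_or_eq with hn | rfl
    · have h := mul_mul_le_of_quasiMultiplicative hπpos hqm hlin hn hnN
      have : (n : ℝ) * π 1 n ≤ D₅ / D₂ * (N * π 1 N) := by
        rw [div_mul_eq_mul_div, le_div_iff₀ hD₂]
        linarith
      nlinarith
    · have h := le_mul_of_linear_lower_bound hlin hnN.le
      have : (1 : ℕ) * π 1 1 ≤ π 1 1 / D₂ * (N * π 1 N) := by
        rw [Nat.cast_one, one_mul, div_mul_eq_mul_div, le_div_iff₀ hD₂]
        exact mul_le_mul_of_nonneg_left h (hπpos 1 1).le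
      nlinarith
  · nlinarith

end QuasiMultiplicative

theorem stmt_8_general (D₂ D₄ D₅ : ℝ) (hD₂ : 0 < D₂) (hD₅ : 0 < D₅)
    (π : ℕ → ℕ → ℝ) (hπpos : ∀ n N, 0 < π n N)
    (hqm : ∀ n₀ n₁ n₂ : ℕ, n₀ < n₁ → n₁ < n₂ →
      D₄ * π n₀ n₂ ≤ π n₀ n₁ * π n₁ n₂ ∧ π n₀ n₁ * π n₁ n₂ ≤ D₅ * π n₀ n₂)
    (hRSW : ∀ n N : ℕ, 1 ≤ n → n ≤ N →
      D₂ * ((n : ℝ) / (N : ℝ)) ^ ((1 : ℝ) / 2) ≤ π n N) :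
    ∃ C₆ : ℝ, 0 < C₆ ∧ ∀ k : ℕ,
      ∑ j ∈ range (k + 1), (2 : ℝ) ^ (2 * j) * π 1 (2 ^ j) * π 1 (2 ^ k)
        ≤ C₆ * ((2 : ℝ) ^ k * π 1 (2 ^ k)) ^ 2 := by
  have hlin : ∀ n N : ℕ, 1 ≤ n → n ≤ N → D₂ * ((n : ℝ) / N) ≤ π n N := fun n N hn hnN ↦
    le_of_le_rpow_half hD₂.le (by positivity)
      (div_le_one_of_le₀ (by exact_mod_cast hnN) (Nat.cast_nonneg N)) (hRSW n N hn hnN)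
  set C := 1 + D₅ / D₂ + π 1 1 / D₂
  have hC : 0 < C := by have := hπpos 1 1; positivity
  refine ⟨2 * C, by positivity, fun k ↦ ?_⟩
  set f : ℕ → ℝ := fun j ↦ 2 ^ j * π 1 (2 ^ j)
  have hmono : ∀ j ≤ k, f j ≤ C * f k := fun j hj ↦ by
    simpa only [f, Nat.cast_pow, Nat.cast_ofNat] using
      mul_le_const_mul_of_le hD₂ hD₅ hπpos (fun a b c h₁ h₂ ↦ (hqm a b c h₁ h₂).2) hlin
        Nat.one_le_two_pow (Nat.pow_le_pow_right two_pos hj)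
  have hsum := sum_two_pow_mul_le hmono (mul_pos hC (by positivity [hπpos 1 (2 ^ k)])).le
  calc ∑ j ∈ range (k + 1), (2 : ℝ) ^ (2 * j) * π 1 (2 ^ j) * π 1 (2 ^ k)
      = (∑ j ∈ range (k + 1), (2 : ℝ) ^ j * f j) * π 1 (2 ^ k) := by
        rw [sum_mul]
        exact sum_congr rfl fun j _ ↦ by rw [two_mul, pow_add]; ring
    _ ≤ 2 * C * (2 ^ k * f k) * π 1 (2 ^ k) :=
        mul_le_mul_of_nonneg_right hsum (hπpos 1 _).le
    _ = 2 * C * ((2 : ℝ) ^ k * π 1 (2 ^ k)) ^ 2 := by ring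

/-- Key summation in the variance bound: quasi-multiplicativity together with
the RSW bound D₂(n/N)^{1/2} ≤ π(n|N) gives
∑_{j≤k} 2^{2j} π(1|2^j) π(1|2^k) ≤ C₆ [2^k π(1|2^k)]². -/
theorem stmt_8 (D₂ D₄ D₅ : ℝ) (hD₂ : 0 < D₂) (hD₄ : 0 < D₄) (hD₅ : 0 < D₅)
    (π : ℕ → ℕ → ℝ) (hπpos : ∀ n N, 0 < π n N)
    (hqm : ∀ n₀ n₁ n₂ : ℕ, n₀ < n₁ → n₁ < n₂ →
      D₄ * π n₀ n₂ ≤ π n₀ n₁ * π n₁ n₂ ∧ π n₀ n₁ * π n₁ n₂ ≤ D₅ * π n₀ n₂)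
    (hRSW : ∀ n N : ℕ, 1 ≤ n → n ≤ N →
      D₂ * ((n : ℝ) / (N : ℝ)) ^ ((1 : ℝ) / 2) ≤ π n N) :
    ∃ C₆ : ℝ, 0 < C₆ ∧ ∀ k : ℕ,
      ∑ j ∈ range (k + 1), (2 : ℝ) ^ (2 * j) * π 1 (2 ^ j) * π 1 (2 ^ k)
        ≤ C₆ * ((2 : ℝ) ^ k * π 1 (2 ^ k)) ^ 2 :=
  stmt_8_general D₂ D₄ D₅ hD₂ hD₅ π hπpos hqm hRSW
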